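/- arXiv:2208.03875 — 2 statements merged into one kernel-verified Lean document; each statement's English description precedes it below -/
import Mathlib

section
/- Fix N = 4, h > 0, and constants p₁₀,…,p₄₀ and q₅₀,…,q₈₀ ∈ ℝ, and set H₁ := H(p₁₀,…,p₄₀,q₅₀,…,q₈₀) where H(u₁,…,u₄,v₁,…,v₄) = (1/h²)·Σ_{i∈ℤ/4}(u_i u_{i-1} + v_i v_{i-1}) - (1/h⁴)·Σ_{i∈ℤ/4} ln(1+h²(u_i²+v_i²)). Let c_i denote the partial derivative of H with respect to u_i and e_i the partial derivative with respect to v_i, both evaluated at (p₁₀,…,p₄₀,q₅₀,…,q₈₀). Given also initial values p₅₀,…,p₈₀ and q₁₀,…,q₄₀ ∈ ℝ, define for i = 1,…,4: p_i(t) := p_{i0}, q_{4+i}(t) := q_{4+i,0}, p_{4+i}(t) := (√(1+h²p_{i0}²)/h)·tan(t·h·c_i·√(1+h²p_{i0}²) + arctan(h·p_{4+i,0}/√(1+h²p_{i0}²))), and q_i(t) := (√(1+h²q_{4+i,0}²)/h)·tan(-t·h·e_i·√(1+h²q_{4+i,0}²) + arctan(h·q_{i0}/√(1+h²q_{4+i,0}²))).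 Then, on the interval of t around 0 where all tangent arguments lie in (-π/2,π/2), these functions satisfy p_i' = 0, q_{4+i}' = 0, p_{4+i}'(t) = (1 + h²(p_{i0}² + p_{4+i}(t)²))·c_i, q_i'(t) = -(1 + h²(q_i(t)² + q_{4+i,0}²))·e_i, together with the given initial conditions at t = 0. -/
/-! Each moving coordinate obeys a Riccati equation `y' = (r² + h² y²) k` with the constant
`r² = 1 + h² a²` coming from its frozen partner `a`. Since `tan' = 1 + tan²`, the function
`y = (r / h) tan θ` with phase `θ' = h k r` solves it, and the phase offset `arctan (h b / r)`
makes `y (0) = b`. -/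

open Real
open scoped BigOperators

/-- The Ablowitz–Ladik Hamiltonian with N = 4:
H(u₁,…,u₄,v₁,…,v₄) = (1/h²)·Σ_{i∈ℤ/4}(u_i u_{i-1} + v_i v_{i-1})
  - (1/h⁴)·Σ_{i∈ℤ/4} ln(1 + h²(u_i² + v_i²)). -/
noncomputable def ALH4 (h : ℝ) (u v : ZMod 4 → ℝ) : ℝ :=
  (1 / h ^ 2) * ∑ i : ZMod 4, (u i * u (i - 1) + v i * v (i - 1))
    - (1 / h ^ 4) * ∑ i : ZMod 4, Real.log (1 + h ^ 2 * ((u i) ^ 2 + (v i) ^ 2))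

theorem Real.hasDerivAt_tan_eq_one_add_tan_sq {x : ℝ} (hx : cos x ≠ 0) :
    HasDerivAt tan (1 + tan x ^ 2) x := by
  simpa [← inv_one_add_tan_sq hx] using hasDerivAt_tan hx

theorem hasDerivAt_div_mul_tan_riccati {θ : ℝ → ℝ} {h r a k t : ℝ} (hh : h ≠ 0)
    (hr : r ^ 2 = 1 + h ^ 2 * a ^ 2) (hθ : HasDerivAt θ (h * k * r) t) (hcos : cos (θ t) ≠ 0) :
    HasDerivAt (fun s => r / h * tan (θ s))
      ((1 + h ^ 2 * (a ^ 2 + (r / h * tan (θ t)) ^ 2)) * k) t := by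
  refine (((hasDerivAt_tan_eq_one_add_tan_sq hcos).comp t hθ).const_mul (r / h)).congr_deriv ?_
  field_simp
  linear_combination k * hr

theorem div_mul_tan_arctan_div {h r b : ℝ} (hh : h ≠ 0) (hr : r ≠ 0) :
    r / h * tan (arctan (h * b / r)) = b := by
  rw [tan_arctan]
  field_simp

theorem sq_sqrt_one_add_sq_mul_sq (h a : ℝ) :
    √(1 + h ^ 2 * a ^ 2) ^ 2 = 1 + h ^ 2 * a ^ 2 :=
  sq_sqrt (by positivity)

theorem sqrt_one_add_sq_mul_sq_ne_zero (h a : ℝ) : √(1 + h ^ 2 * a ^ 2) ≠ 0 :=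
  (sqrt_pos.mpr (by positivity)).ne'

/-- `P0 i` is the frozen value p_{i0}, `Q0 i` is the frozen value q_{4+i,0},
`P40 i` is the initial value p_{4+i,0} and `Q00 i` is the initial value q_{i0};
`c i` and `e i` are the frozen partial derivatives of H with respect to u_i and v_i. -/
theorem ablowitz_ladik_subsystem_exact_solution
    (h : ℝ) (hh : 0 < h) (P0 Q0 P40 Q00 : ZMod 4 → ℝ) :
    let c : ZMod 4 → ℝ := fun i => fderiv ℝ (fun a => ALH4 h a Q0) P0 (Pi.single i 1)
    let e : ZMod 4 → ℝ := fun i => fderiv ℝ (fun b => ALH4 h P0 b) Q0 (Pi.single i 1)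
    let pLow : ZMod 4 → ℝ → ℝ := fun i _ => P0 i
    let qHigh : ZMod 4 → ℝ → ℝ := fun i _ => Q0 i
    let pHigh : ZMod 4 → ℝ → ℝ := fun i t =>
      (Real.sqrt (1 + h ^ 2 * (P0 i) ^ 2) / h) *
        tan (t * h * c i * Real.sqrt (1 + h ^ 2 * (P0 i) ^ 2)
          + arctan (h * P40 i / Real.sqrt (1 + h ^ 2 * (P0 i) ^ 2)))
    let qLow : ZMod 4 → ℝ → ℝ := fun i t =>
      (Real.sqrt (1 + h ^ 2 * (Q0 i) ^ 2) / h) *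
        tan (-(t * h * e i * Real.sqrt (1 + h ^ 2 * (Q0 i) ^ 2))
          + arctan (h * Q00 i / Real.sqrt (1 + h ^ 2 * (Q0 i) ^ 2)))
    -- initial conditions at t = 0
    (∀ i : ZMod 4, pLow i 0 = P0 i) ∧
    (∀ i : ZMod 4, qHigh i 0 = Q0 i) ∧
    (∀ i : ZMod 4, pHigh i 0 = P40 i) ∧
    (∀ i : ZMod 4, qLow i 0 = Q00 i) ∧
    -- the differential equations, on the interval around 0 where all tangent
    -- arguments lie in (-π/2, π/2)
    (∀ t : ℝ,
      (∀ i : ZMod 4,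
        t * h * c i * Real.sqrt (1 + h ^ 2 * (P0 i) ^ 2)
            + arctan (h * P40 i / Real.sqrt (1 + h ^ 2 * (P0 i) ^ 2)) ∈
          Set.Ioo (-(π / 2)) (π / 2) ∧
        -(t * h * e i * Real.sqrt (1 + h ^ 2 * (Q0 i) ^ 2))
            + arctan (h * Q00 i / Real.sqrt (1 + h ^ 2 * (Q0 i) ^ 2)) ∈
          Set.Ioo (-(π / 2)) (π / 2)) →
      ∀ i : ZMod 4,
        HasDerivAt (pLow i) 0 t ∧
        HasDerivAt (qHigh i) 0 t ∧
        HasDerivAt (pHigh i) ((1 + h ^ 2 * ((P0 i) ^ 2 + (pHigh i t) ^ 2)) * c i) t ∧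
        HasDerivAt (qLow i) (-((1 + h ^ 2 * ((qLow i t) ^ 2 + (Q0 i) ^ 2)) * e i)) t) := by
  intro c e pLow qHigh pHigh qLow
  refine ⟨fun i => rfl, fun i => rfl, fun i => ?_, fun i => ?_, fun t ht i => ?_⟩
  · simpa [pHigh] using div_mul_tan_arctan_div hh.ne' (sqrt_one_add_sq_mul_sq_ne_zero h (P0 i))
  · simpa [qLow] using div_mul_tan_arctan_div hh.ne' (sqrt_one_add_sq_mul_sq_ne_zero h (Q0 i))
  obtain ⟨hp, hq⟩ := ht i
  refine ⟨hasDerivAt_const t _, hasDerivAt_const t _, ?_, ?_⟩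
  · have hθ : HasDerivAt (fun s => s * h * c i * √(1 + h ^ 2 * P0 i ^ 2)
        + arctan (h * P40 i / √(1 + h ^ 2 * P0 i ^ 2))) (h * c i * √(1 + h ^ 2 * P0 i ^ 2)) t := by
      simpa using ((((hasDerivAt_id t).mul_const h).mul_const (c i)).mul_const _).add_const
        (arctan (h * P40 i / √(1 + h ^ 2 * P0 i ^ 2)))
    exact hasDerivAt_div_mul_tan_riccati hh.ne' (sq_sqrt_one_add_sq_mul_sq h (P0 i)) hθ
      (cos_pos_of_mem_Ioo hp).ne'
  · have hθ : HasDerivAt (fun s => -(s * h * e i * √(1 + h ^ 2 * Q0 i ^ 2))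
        + arctan (h * Q00 i / √(1 + h ^ 2 * Q0 i ^ 2))) (h * -e i * √(1 + h ^ 2 * Q0 i ^ 2)) t := by
      simpa using (((((hasDerivAt_id t).mul_const h).mul_const (e i)).mul_const _).neg).add_const
        (arctan (h * Q00 i / √(1 + h ^ 2 * Q0 i ^ 2)))
    exact (hasDerivAt_div_mul_tan_riccati hh.ne' (sq_sqrt_one_add_sq_mul_sq h (Q0 i)) hθ
      (cos_pos_of_mem_Ioo hq).ne').congr_deriv (by ring)
end

section
/- Let d ≥ 1, Ω ∈ ℝ, H : ℝᵈ → ℝ continuously differentiable, and K⁻¹ : ℝᵈ → Matrix (Fin d) (Fin d) ℝ continuous. Let H̄ = Σ_{i=1}^d H_i + Ω·H_c be the augmented Hamiltonian on (ℝᵈ)ᵈ built from the mixed Hamiltonians H_i (each taking exactly one coordinate from each copy, via the cyclic assignment σ(i,j) ≡ d + j - i mod d) and the constraint H_c = Σ_{1≤i<j≤d} ‖P_i - P_j‖²/2. If P : ℝ → ℝᵈ is differentiable on an interval I and solves P'(t) = K⁻¹(P(t))·∇H(P(t)) on I, then the diagonal curve (P₁,…,P_d) := (P,…,P) solves the extended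 system P_k'(t) = K⁻¹(P_k(t)) · ∇_{P_k} H̄(P₁(t),…,P_d(t)) for every k ∈ {1,…,d} on I. -/
/-!
On the diagonal `Z = (z, …, z)` the mixed Hamiltonian `H_i` reads `z` itself, and its partial
derivative in the direction `Z k j` is `∂_j H(z)` if `k = j - i` and zero otherwise. For fixed
`(k, j)` exactly one `i` qualifies, so the gradient of `Σ_i H_i` with respect to every copy is
`∇H(z)`. The constraint `H_c` is nonnegative and vanishes on the diagonal, so the diagonal consists
of minima of `H_c` and its gradient vanishes there. Hence the extended vector field at `(P, …, P)`
is `K⁻¹(P) ∇H(P)`.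
-/

open Matrix
open scoped BigOperators

/-- The i-th mixed Hamiltonian H_i(P₁,…,P_d) := H(x₁,…,x_d) where x_j := p_{σ(i,j),j}
and σ(i,j) is the unique index congruent to d + j - i modulo d (in 0-based indexing on
`Fin d` this is just j - i computed modulo d). -/
noncomputable def mixedHam (d : ℕ) (H : (Fin d → ℝ) → ℝ)
    (i : Fin d) (Z : Fin d → Fin d → ℝ) : ℝ :=
  H (fun j => Z (j - i) j)

/-- The constraint H_c := Σ_{i<j} ‖P_i - P_j‖₂²/2 (Euclidean 2-norm). -/
noncomputable def constraintHam (d : ℕ) (Z : Fin d → Fin d → ℝ) : ℝ :=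
  ∑ i : Fin d, ∑ j : Fin d,
    if i < j then (∑ l : Fin d, (Z i l - Z j l) ^ 2) / 2 else 0

/-- The augmented Hamiltonian H̄ := Σ_i H_i + Ω·H_c. -/
noncomputable def augHam (d : ℕ) (Ω : ℝ) (H : (Fin d → ℝ) → ℝ)
    (Z : Fin d → Fin d → ℝ) : ℝ :=
  (∑ i : Fin d, mixedHam d H i Z) + Ω * constraintHam d Z

/-- Gradient of H, expressed coordinatewise via partial derivatives. -/
noncomputable def gradVec (d : ℕ) (H : (Fin d → ℝ) → ℝ) (z : Fin d → ℝ) : Fin d → ℝ :=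
  fun j => fderiv ℝ H z (Pi.single j 1)

noncomputable def cyclicSelect (d : ℕ) (i : Fin d) : (Fin d → Fin d → ℝ) →L[ℝ] (Fin d → ℝ) :=
  ContinuousLinearMap.pi fun j =>
    (ContinuousLinearMap.proj (R := ℝ) (φ := fun _ : Fin d => ℝ) j).comp
      (ContinuousLinearMap.proj (R := ℝ) (φ := fun _ : Fin d => Fin d → ℝ) (j - i))

section Diagonal

variable {d : ℕ}

@[simp]
theorem cyclicSelect_apply (i : Fin d) (Z : Fin d → Fin d → ℝ) :
    cyclicSelect d i Z = fun j => Z (j - i) j :=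
  rfl

theorem cyclicSelect_single (i k j : Fin d) (c : ℝ) :
    cyclicSelect d i (Pi.single k (Pi.single j c)) =
      if j - i = k then Pi.single j c else 0 := by
  funext j'
  by_cases h : j - i = k <;> by_cases hj : j' = j <;> simp [Pi.single_apply, ite_apply, h, hj]

theorem hasFDerivAt_mixedHam_diag {H : (Fin d → ℝ) → ℝ} {H' : (Fin d → ℝ) →L[ℝ] ℝ}
    {z : Fin d → ℝ} (hH : HasFDerivAt H H' z) (i : Fin d) :
    HasFDerivAt (mixedHam d H i) (H'.comp (cyclicSelect d i)) (fun _ => z) :=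
  hH.comp _ (cyclicSelect d i).hasFDerivAt

theorem constraintHam_nonneg (Z : Fin d → Fin d → ℝ) : 0 ≤ constraintHam d Z := by
  unfold constraintHam
  refine Finset.sum_nonneg fun i _ => Finset.sum_nonneg fun j _ => ?_
  split_ifs <;> positivity

theorem constraintHam_diag (z : Fin d → ℝ) : constraintHam d (fun _ => z) = 0 := by
  simp [constraintHam]

theorem differentiable_constraintHam : Differentiable ℝ (constraintHam d) := by
  refine Differentiable.fun_sum fun i _ => Differentiable.fun_sum fun j _ => ?_
  split_ifs <;> fun_prop

theorem hasFDerivAt_constraintHam_diag (z : Fin d → ℝ) :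
    HasFDerivAt (𝕜 := ℝ) (constraintHam d) 0 (fun _ => z) := by
  have hmin : IsLocalMin (constraintHam d) (fun _ => z) :=
    Filter.Eventually.of_forall (f := nhds _) fun Z => by
      simpa [constraintHam_diag] using constraintHam_nonneg Z
  have hdiff := (differentiable_constraintHam (fun _ => z)).hasFDerivAt
  rwa [hmin.fderiv_eq_zero] at hdiff

theorem hasFDerivAt_augHam_diag (Ω : ℝ) {H : (Fin d → ℝ) → ℝ} {H' : (Fin d → ℝ) →L[ℝ] ℝ}
    {z : Fin d → ℝ} (hH : HasFDerivAt H H' z) :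
    HasFDerivAt (augHam d Ω H) (∑ i, H'.comp (cyclicSelect d i)) (fun _ => z) := by
  have h := (HasFDerivAt.fun_sum (u := Finset.univ) fun i _ =>
    hasFDerivAt_mixedHam_diag hH i).fun_add
    ((hasFDerivAt_constraintHam_diag z).const_mul Ω)
  rwa [smul_zero, add_zero] at h

theorem sum_cyclicSelect_single (L : (Fin d → ℝ) →L[ℝ] ℝ) (k j : Fin d) :
    ∑ i, L (cyclicSelect d i (Pi.single k (Pi.single j 1))) = L (Pi.single j 1) := by
  have : NeZero d := ⟨k.pos.ne'⟩
  simp only [cyclicSelect_single, apply_ite L, map_zero, sub_eq_iff_comm (a := j)]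
  simp

theorem fderiv_augHam_diag_single (Ω : ℝ) {H : (Fin d → ℝ) → ℝ} {z : Fin d → ℝ}
    (hH : DifferentiableAt ℝ H z) (k j : Fin d) :
    fderiv ℝ (augHam d Ω H) (fun _ => z) (Pi.single k (Pi.single j 1)) =
      fderiv ℝ H z (Pi.single j 1) := by
  rw [(hasFDerivAt_augHam_diag Ω hH.hasFDerivAt).fderiv, _root_.sum_apply]
  exact sum_cyclicSelect_single _ k j

end Diagonal

theorem diagonal_solves_extended_system_general
    (d : ℕ) (Ω : ℝ)
    (H : (Fin d → ℝ) → ℝ) (hH : ContDiff ℝ 1 H)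
    (Kinv : (Fin d → ℝ) → Matrix (Fin d) (Fin d) ℝ)
    (I : Set ℝ)
    (P : ℝ → Fin d → ℝ)
    (hP : ∀ t ∈ I, HasDerivWithinAt P ((Kinv (P t)).mulVec (gradVec d H (P t))) I t) :
    ∀ k : Fin d, ∀ t ∈ I,
      HasDerivWithinAt P
        ((Kinv (P t)).mulVec
          (fun j => fderiv ℝ (augHam d Ω H) (fun _ => P t) (Pi.single k (Pi.single j 1))))
        I t := by
  intro k t ht
  have hgrad : (fun j => fderiv ℝ (augHam d Ω H) (fun _ => P t) (Pi.single k (Pi.single j 1))) =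
      gradVec d H (P t) :=
    funext fun j => fderiv_augHam_diag_single Ω (hH.differentiable one_ne_zero _) k j
  rw [hgrad]
  exact hP t ht

/-- If P solves the original system P' = K⁻¹(P)·∇H(P) on an interval I, then the diagonal
curve (P,…,P) solves the extended system P_k' = K⁻¹(P_k)·∇_{P_k}H̄(P₁,…,P_d) for every k. -/
theorem diagonal_solves_extended_system
    (d : ℕ) [NeZero d] (Ω : ℝ)
    (H : (Fin d → ℝ) → ℝ) (hH : ContDiff ℝ 1 H)
    (Kinv : (Fin d → ℝ) → Matrix (Fin d) (Fin d) ℝ) (hK : Continuous Kinv)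
    (I : Set ℝ) (hI : I.OrdConnected)
    (P : ℝ → Fin d → ℝ)
    (hP : ∀ t ∈ I, HasDerivWithinAt P ((Kinv (P t)).mulVec (gradVec d H (P t))) I t) :
    ∀ k : Fin d, ∀ t ∈ I,
      HasDerivWithinAt P
        ((Kinv (P t)).mulVec
          (fun j => fderiv ℝ (augHam d Ω H) (fun _ => P t) (Pi.single k (Pi.single j 1))))
        I t :=
  diagonal_solves_extended_system_general d Ω H hH Kinv I P hP
end
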